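/- Let γ_1, …, γ_m and ω_1, …, ω_n be positive integers with gcd(γ_1,…,γ_m) = 1 and gcd(ω_1,…,ω_n) = 1. In ℂ[[x_1,x_2,y_1,y_2]] let I_Δ be the ideal generated by the binomials x_1^{γ_i} − y_1^{γ_i} (1 ≤ i ≤ m) and x_2^{ω_j} − y_2^{ω_j} (1 ≤ j ≤ n); in ℂ[[x_1,y_1]] let I_1 be the ideal generated by the x_1^{γ_i} − y_1^{γ_i}; and in ℂ[[x_2,y_2]] let I_2 be the ideal generated by the x_2^{ω_j} − y_2^{ω_j}. Then for every (a,b) ∈ ℕ², the element x_1^a x_2^b − y_1^a y_2^b is integral over I_Δ if and only if x_1^a − y_1^a is integral over I_1 and x_2^b − y_2^b is integral over I_2. -/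

import Mathlib

/-!
If `x₁^a - y₁^a` and `x₂^b - y₂^b` are integral over `I_Δ`, then so is
`x₂^b (x₁^a - y₁^a) + y₁^a (x₂^b - y₂^b) = x₁^a x₂^b - y₁^a y₂^b`, because the elements integral
over an ideal `I` form an ideal: `f` is integral over `I` iff `f t` is integral over the Rees
algebra `R[I t]`.

Conversely, substituting `x₂ = y₂ = t` maps `I_Δ` into `I₁ · ℂ[[x₁,y₁]][[t]]` and
`x₁^a x₂^b - y₁^a y₂^b` to `t^b (x₁^a - y₁^a)`. In an equation of integral dependence of degree `m`
for `t^b f` the coefficient of `t^(b m)` is an equation of integral dependence for `f` over `I₁`,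
since the coefficients of a power series in `I₁^j · ℂ[[x₁,y₁]][[t]]` lie in `I₁^j`.
-/

/-- An element `f` of a commutative ring is *integral over the ideal* `I` if it satisfies an
equation `f ^ m + a 1 * f ^ (m-1) + ⋯ + a (m-1) * f + a m = 0` with `a j ∈ I ^ j`. -/
def IsIntegralOverIdeal {R : Type*} [CommRing R] (I : Ideal R) (f : R) : Prop :=
  ∃ m : ℕ, 0 < m ∧ ∃ a : ℕ → R, (∀ j, 1 ≤ j → j ≤ m → a j ∈ I ^ j) ∧
    f ^ m + ∑ j ∈ Finset.Icc 1 m, a j * f ^ (m - j) = 0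

section IntegralOverIdeal

variable {R S : Type*} [CommRing R] [CommRing S] {I J : Ideal R} {f g : R}

theorem isIntegralOverIdeal_iff_exists_sum_range :
    IsIntegralOverIdeal I f ↔ ∃ m, 0 < m ∧ ∃ c : ℕ → R, (∀ i < m, c i ∈ I ^ (m - i)) ∧
      f ^ m + ∑ i ∈ Finset.range m, c i * f ^ i = 0 := by
  have reflect (m : ℕ) (a : ℕ → R) :
      ∑ j ∈ Finset.Icc 1 m, a j * f ^ (m - j) = ∑ i ∈ Finset.range m, a (m - i) * f ^ i :=
    Finset.sum_nbij' (m - ·) (m - ·)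
      (fun j hj => Finset.mem_range.2 (by have := Finset.mem_Icc.1 hj; omega))
      (fun i hi => Finset.mem_Icc.2 (by have := Finset.mem_range.1 hi; omega))
      (fun j hj => Nat.sub_sub_self (Finset.mem_Icc.1 hj).2)
      (fun i hi => Nat.sub_sub_self (Finset.mem_range.1 hi).le)
      fun j hj => by rw [Nat.sub_sub_self (Finset.mem_Icc.1 hj).2]
  constructor
  · rintro ⟨m, hm, a, ha, h⟩
    refine ⟨m, hm, fun i => a (m - i), fun i hi => ?_, by rwa [← reflect]⟩
    simpa [Nat.sub_sub_self hi.le] using ha (m - i) (by omega) (by omega)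
  · rintro ⟨m, hm, c, hc, h⟩
    refine ⟨m, hm, fun j => c (m - j), fun j hj₁ hj₂ => ?_, ?_⟩
    · simpa [Nat.sub_sub_self hj₂] using hc (m - j) (by omega)
    · rw [reflect, ← h]
      congr 1
      exact Finset.sum_congr rfl fun i hi => by
        rw [Nat.sub_sub_self (Finset.mem_range.1 hi).le]

theorem IsIntegralOverIdeal.map {F : Type*} [FunLike F R S] [RingHomClass F R S] (φ : F)
    (h : IsIntegralOverIdeal I f) :
    IsIntegralOverIdeal (I.map φ) (φ f) := by
  obtain ⟨m, hm, a, ha, h⟩ := h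
  refine ⟨m, hm, fun j => φ (a j), fun j hj₁ hj₂ => ?_, ?_⟩
  · rw [← Ideal.map_pow]
    exact Ideal.mem_map_of_mem φ (ha j hj₁ hj₂)
  · simpa using congrArg φ h

theorem IsIntegralOverIdeal.mono (hIJ : I ≤ J) (h : IsIntegralOverIdeal I f) :
    IsIntegralOverIdeal J f := by
  obtain ⟨m, hm, a, ha, h⟩ := h
  exact ⟨m, hm, a, fun j hj₁ hj₂ => Ideal.pow_right_mono hIJ j (ha j hj₁ hj₂), h⟩

theorem IsIntegralOverIdeal.mul_left (r : R) (h : IsIntegralOverIdeal I f) :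
    IsIntegralOverIdeal I (r * f) := by
  obtain ⟨m, hm, a, ha, h⟩ := h
  refine ⟨m, hm, fun j => r ^ j * a j, fun j hj₁ hj₂ => Ideal.mul_mem_left _ _ (ha j hj₁ hj₂), ?_⟩
  calc (r * f) ^ m + ∑ j ∈ Finset.Icc 1 m, r ^ j * a j * (r * f) ^ (m - j)
      = r ^ m * (f ^ m + ∑ j ∈ Finset.Icc 1 m, a j * f ^ (m - j)) := by
        rw [mul_add, Finset.mul_sum, mul_pow]
        congr 1
        refine Finset.sum_congr rfl fun j hj => ?_
        rw [← pow_sub_mul_pow r (Finset.mem_Icc.1 hj).2]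
        ring
    _ = 0 := by rw [h, mul_zero]

open Polynomial

theorem IsIntegralOverIdeal.isIntegral_reesAlgebra (h : IsIntegralOverIdeal I f) :
    IsIntegral (reesAlgebra I) (C f * X) := by
  obtain ⟨m, -, c, hc, h⟩ := isIntegralOverIdeal_iff_exists_sum_range.1 h
  let b (i : ℕ) : reesAlgebra I := ⟨monomial (m - i) (c i), reesAlgebra.monomial_mem.2 <| by
    rcases lt_or_ge i m with hi | hi
    · exact hc i hi
    · simp [Nat.sub_eq_zero_of_le hi]⟩
  refine ⟨X ^ m + ∑ i ∈ Finset.range m, C (b i) * X ^ i,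
    monic_X_pow_add (by simp_rw [← Fin.sum_univ_eq_sum_range, degree_sum_fin_lt]), ?_⟩
  rw [← aeval_def, map_add, map_sum, map_pow, aeval_X]
  simp only [map_mul, map_pow, aeval_X, aeval_C, b]
  calc _ = C (f ^ m + ∑ i ∈ Finset.range m, c i * f ^ i) * X ^ m := by
        rw [C_add, add_mul, map_sum, Finset.sum_mul, mul_pow, C_pow]
        congr 1
        refine Finset.sum_congr rfl fun i hi => ?_
        rw [Subalgebra.algebraMap_mk, Algebra.algebraMap_self, RingHom.id_apply,
          ← C_mul_X_pow_eq_monomial, ← pow_sub_mul_pow X (Finset.mem_range.1 hi).le, C_mul, C_pow]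
        ring
    _ = 0 := by rw [h, C_0, zero_mul]

theorem IsIntegralOverIdeal.of_isIntegral_reesAlgebra [Nontrivial R]
    (h : IsIntegral (reesAlgebra I) (C f * X)) : IsIntegralOverIdeal I f := by
  obtain ⟨p, hp, hpf⟩ := h
  obtain ⟨q, hq, hqf, hM⟩ : ∃ q : (reesAlgebra I)[X], q.Monic ∧
      eval₂ (algebraMap (reesAlgebra I) R[X]) (C f * X) q = 0 ∧ 0 < q.natDegree :=
    ⟨p * X, hp.mul monic_X, by rw [eval₂_mul_X, hpf, zero_mul],
      by rw [natDegree_mul_X hp.ne_zero]; omega⟩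
  set M := q.natDegree
  have hcoeff (i : ℕ) (hi : i ≤ M) :
      coeff (algebraMap (reesAlgebra I) R[X] (q.coeff i) * (C f * X) ^ i) M =
        coeff (q.coeff i : R[X]) (M - i) * f ^ i := by
    rw [mul_pow, ← C_pow, ← mul_assoc, coeff_mul_X_pow', if_pos hi, coeff_mul_C]
    rfl
  refine isIntegralOverIdeal_iff_exists_sum_range.2
    ⟨M, hM, fun i => coeff (q.coeff i : R[X]) (M - i),
      fun i _ => (mem_reesAlgebra_iff I _).1 (q.coeff i).2 _, ?_⟩
  have h := congrArg (coeff · M) hqf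
  rw [eval₂_eq_sum_range, Finset.sum_range_succ, coeff_add, finsetSum_coeff, coeff_zero,
    hcoeff M le_rfl, Finset.sum_congr rfl fun i hi => hcoeff i (Finset.mem_range.1 hi).le,
    hq.coeff_natDegree, Nat.sub_self, OneMemClass.coe_one, coeff_one_zero, one_mul] at h
  rwa [add_comm]

theorem IsIntegralOverIdeal.add (hf : IsIntegralOverIdeal I f) (hg : IsIntegralOverIdeal I g) :
    IsIntegralOverIdeal I (f + g) := by
  rcases subsingleton_or_nontrivial R with hR | hR
  · exact ⟨1, one_pos, 0, fun _ _ _ => zero_mem _, Subsingleton.elim _ _⟩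
  refine of_isIntegral_reesAlgebra ?_
  rw [C_add, add_mul]
  exact hf.isIntegral_reesAlgebra.add hg.isIntegral_reesAlgebra

theorem IsIntegralOverIdeal.mul_sub_mul {x y u v : R} (h₁ : IsIntegralOverIdeal I (x - y))
    (h₂ : IsIntegralOverIdeal I (u - v)) : IsIntegralOverIdeal I (x * u - y * v) := by
  have h := (h₁.mul_left u).add (h₂.mul_left y)
  rwa [show u * (x - y) + y * (u - v) = x * u - y * v by ring] at h

end IntegralOverIdeal

namespace PowerSeries

variable {R : Type*} [CommRing R] {I : Ideal R}

theorem coeff_mem_of_mem_map_C {p : R⟦X⟧} (hp : p ∈ I.map C) (n : ℕ) : coeff n p ∈ I := by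
  induction hp using Submodule.span_induction generalizing n with
  | mem p hp =>
    obtain ⟨a, ha, rfl⟩ := hp
    rw [coeff_C]
    split_ifs
    exacts [ha, I.zero_mem]
  | zero => simp
  | add p q _ _ hp hq => simpa using add_mem (hp n) (hq n)
  | smul r p _ hp => exact coeff_mul_mem_ideal_of_coeff_right_mem_ideal' hp n

theorem isIntegralOverIdeal_of_X_pow_mul_C {f : R} {b : ℕ}
    (h : IsIntegralOverIdeal (I.map C) (X ^ b * C f)) : IsIntegralOverIdeal I f := by
  obtain ⟨m, hm, a, ha, h⟩ := h
  have hpow (k : ℕ) : (X ^ b * C f) ^ k = X ^ (b * k) * C (f ^ k) := by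
    rw [mul_pow, ← pow_mul, map_pow]
  refine ⟨m, hm, fun j => coeff (b * j) (a j), fun j hj₁ hj₂ => ?_, ?_⟩
  · have haj := ha j hj₁ hj₂
    rw [← Ideal.map_pow] at haj
    exact coeff_mem_of_mem_map_C haj _
  · have h := congrArg (coeff (b * m)) h
    rw [map_add, map_sum, hpow, coeff_X_pow_mul', if_pos le_rfl, Nat.sub_self, coeff_zero_C,
      map_zero] at h
    rw [← h]
    congr 1
    refine Finset.sum_congr rfl fun j hj => ?_
    rw [hpow, ← mul_assoc, coeff_mul_C, coeff_mul_X_pow',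
      if_pos (Nat.mul_le_mul_left b (Nat.sub_le m j)), ← Nat.mul_sub,
      Nat.sub_sub_self (Finset.mem_Icc.1 hj).2]

end PowerSeries

theorem Ideal.map_span_range_le_iff {R S F ι : Type*} [CommRing R] [CommRing S] [FunLike F R S]
    [RingHomClass F R S] (φ : F) (g : ι → R) (J : Ideal S) :
    (Ideal.span (Set.range g)).map φ ≤ J ↔ ∀ i, φ (g i) ∈ J := by
  rw [Ideal.map_le_iff_le_comap, Ideal.span_le, Set.range_subset_iff]
  rfl

namespace ToricProduct

open MvPowerSeries

variable (K : Type*) [CommRing K]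

noncomputable def embedFst : MvPowerSeries (Fin 2) K →ₐ[K] MvPowerSeries (Fin 4) K :=
  rename ![0, 2]

noncomputable def embedSnd : MvPowerSeries (Fin 2) K →ₐ[K] MvPowerSeries (Fin 4) K :=
  rename ![1, 3]

/- `collapseSnd` sends both `x₂` and `y₂` to the variable `t` of `K[[x₁,y₁]][[t]]`, killing the
binomials `x₂ ^ k - y₂ ^ k`; `collapseFst` does the same with the two factors exchanged. -/

noncomputable def collapseFst :
    MvPowerSeries (Fin 4) K →ₐ[K] PowerSeries (MvPowerSeries (Fin 2) K) :=
  (optionEquivLeft (Fin 2) K).toAlgHom.comp (rename ![none, some 0, none, some 1])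

noncomputable def collapseSnd :
    MvPowerSeries (Fin 4) K →ₐ[K] PowerSeries (MvPowerSeries (Fin 2) K) :=
  (optionEquivLeft (Fin 2) K).toAlgHom.comp (rename ![some 0, none, some 1, none])

variable {K} {ι κ : Type*} (γ : ι → ℕ) (ω : κ → ℕ)

theorem map_embedFst_le :
    (Ideal.span (Set.range fun i => X 0 ^ γ i - X 1 ^ γ i)).map (embedFst K) ≤
      Ideal.span ((Set.range fun i => X 0 ^ γ i - X 2 ^ γ i) ∪
        (Set.range fun j => X 1 ^ ω j - X 3 ^ ω j)) := by
  rw [Ideal.map_span_range_le_iff]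
  exact fun i => Ideal.subset_span (.inl ⟨i, by simp [embedFst]⟩)

theorem map_embedSnd_le :
    (Ideal.span (Set.range fun j => X 0 ^ ω j - X 1 ^ ω j)).map (embedSnd K) ≤
      Ideal.span ((Set.range fun i => X 0 ^ γ i - X 2 ^ γ i) ∪
        (Set.range fun j => X 1 ^ ω j - X 3 ^ ω j)) := by
  rw [Ideal.map_span_range_le_iff]
  exact fun j => Ideal.subset_span (.inr ⟨j, by simp [embedSnd]⟩)

theorem map_collapseFst_le :
    (Ideal.span ((Set.range fun i => X 0 ^ γ i - X 2 ^ γ i) ∪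
        (Set.range fun j => X 1 ^ ω j - X 3 ^ ω j))).map (collapseFst K) ≤
      (Ideal.span (Set.range fun j => X 0 ^ ω j - X 1 ^ ω j)).map PowerSeries.C := by
  rw [Ideal.span_union, Ideal.map_sup, sup_le_iff, Ideal.map_span_range_le_iff,
    Ideal.map_span_range_le_iff]
  refine ⟨fun i => by simp [collapseFst], fun j => ?_⟩
  rw [show collapseFst K (X 1 ^ ω j - X 3 ^ ω j) = PowerSeries.C (X 0 ^ ω j - X 1 ^ ω j) by
    simp [collapseFst]]
  exact Ideal.mem_map_of_mem _ (Ideal.subset_span ⟨j, rfl⟩)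

theorem map_collapseSnd_le :
    (Ideal.span ((Set.range fun i => X 0 ^ γ i - X 2 ^ γ i) ∪
        (Set.range fun j => X 1 ^ ω j - X 3 ^ ω j))).map (collapseSnd K) ≤
      (Ideal.span (Set.range fun i => X 0 ^ γ i - X 1 ^ γ i)).map PowerSeries.C := by
  rw [Ideal.span_union, Ideal.map_sup, sup_le_iff, Ideal.map_span_range_le_iff,
    Ideal.map_span_range_le_iff]
  refine ⟨fun i => ?_, fun j => by simp [collapseSnd]⟩
  rw [show collapseSnd K (X 0 ^ γ i - X 2 ^ γ i) = PowerSeries.C (X 0 ^ γ i - X 1 ^ γ i) by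
    simp [collapseSnd]]
  exact Ideal.mem_map_of_mem _ (Ideal.subset_span ⟨i, rfl⟩)

theorem collapseFst_binomial (a b : ℕ) :
    collapseFst K (X 0 ^ a * X 1 ^ b - X 2 ^ a * X 3 ^ b) =
      PowerSeries.X ^ a * PowerSeries.C (X 0 ^ b - X 1 ^ b) := by
  simp [collapseFst, ← mul_sub]

theorem collapseSnd_binomial (a b : ℕ) :
    collapseSnd K (X 0 ^ a * X 1 ^ b - X 2 ^ a * X 3 ^ b) =
      PowerSeries.X ^ b * PowerSeries.C (X 0 ^ a - X 1 ^ a) := by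
  simp [collapseSnd, ← mul_sub, mul_comm]

theorem embedFst_binomial (a : ℕ) : embedFst K (X 0 ^ a - X 1 ^ a) = X 0 ^ a - X 2 ^ a := by
  simp [embedFst]

theorem embedSnd_binomial (b : ℕ) : embedSnd K (X 0 ^ b - X 1 ^ b) = X 1 ^ b - X 3 ^ b := by
  simp [embedSnd]

end ToricProduct

open ToricProduct

open MvPowerSeries in
theorem saturation_of_product_of_curves_general (m n : ℕ)
    (γ : Fin m → ℕ) (ω : Fin n → ℕ)
    (IΔ : Ideal (MvPowerSeries (Fin 4) ℂ))
    (hIΔ : IΔ = Ideal.span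
      ((Set.range fun i => X 0 ^ γ i - X 2 ^ γ i) ∪
       (Set.range fun j => X 1 ^ ω j - X 3 ^ ω j)))
    (I₁ I₂ : Ideal (MvPowerSeries (Fin 2) ℂ))
    (hI₁ : I₁ = Ideal.span (Set.range fun i => X 0 ^ γ i - X 1 ^ γ i))
    (hI₂ : I₂ = Ideal.span (Set.range fun j => X 0 ^ ω j - X 1 ^ ω j)) :
    ∀ a b : ℕ,
      IsIntegralOverIdeal IΔ (X 0 ^ a * X 1 ^ b - X 2 ^ a * X 3 ^ b) ↔
        (IsIntegralOverIdeal I₁ (X 0 ^ a - X 1 ^ a) ∧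
         IsIntegralOverIdeal I₂ (X 0 ^ b - X 1 ^ b)) := by
  subst hIΔ hI₁ hI₂
  intro a b
  constructor
  · intro h
    have h₁ := (h.map (collapseSnd ℂ)).mono (map_collapseSnd_le γ ω)
    have h₂ := (h.map (collapseFst ℂ)).mono (map_collapseFst_le γ ω)
    rw [collapseSnd_binomial] at h₁
    rw [collapseFst_binomial] at h₂
    exact ⟨PowerSeries.isIntegralOverIdeal_of_X_pow_mul_C h₁,
      PowerSeries.isIntegralOverIdeal_of_X_pow_mul_C h₂⟩
  · rintro ⟨h₁, h₂⟩
    have h₁' := (h₁.map (embedFst ℂ)).mono (map_embedFst_le γ ω)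
    have h₂' := (h₂.map (embedSnd ℂ)).mono (map_embedSnd_le γ ω)
    rw [embedFst_binomial] at h₁'
    rw [embedSnd_binomial] at h₂'
    exact h₁'.mul_sub_mul h₂'

open MvPowerSeries in
/-- Lipschitz saturation of a product of two toric curves.  In `ℂ[[x_1,x_2,y_1,y_2]]`
(variables `x_1 = X 0`, `x_2 = X 1`, `y_1 = X 2`, `y_2 = X 3`) let
`I_Δ = ⟨x_1^{γ_i} - y_1^{γ_i}, x_2^{ω_j} - y_2^{ω_j}⟩`; in `ℂ[[x_1,y_1]]` (variables
`X 0, X 1` of `Fin 2`) let `I_1 = ⟨x_1^{γ_i} - y_1^{γ_i}⟩`, and in `ℂ[[x_2,y_2]]` let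
`I_2 = ⟨x_2^{ω_j} - y_2^{ω_j}⟩`.  Then `x_1^a x_2^b - y_1^a y_2^b` is integral over `I_Δ`
iff `x_1^a - y_1^a` is integral over `I_1` and `x_2^b - y_2^b` is integral over `I_2`. -/
theorem saturation_of_product_of_curves (m n : ℕ) (hm : 1 ≤ m) (hn : 1 ≤ n)
    (γ : Fin m → ℕ) (ω : Fin n → ℕ)
    (hγ : ∀ i, 0 < γ i) (hω : ∀ j, 0 < ω j)
    (hγgcd : Finset.univ.gcd γ = 1) (hωgcd : Finset.univ.gcd ω = 1)
    (IΔ : Ideal (MvPowerSeries (Fin 4) ℂ))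
    (hIΔ : IΔ = Ideal.span
      ((Set.range fun i => X 0 ^ γ i - X 2 ^ γ i) ∪
       (Set.range fun j => X 1 ^ ω j - X 3 ^ ω j)))
    (I₁ I₂ : Ideal (MvPowerSeries (Fin 2) ℂ))
    (hI₁ : I₁ = Ideal.span (Set.range fun i => X 0 ^ γ i - X 1 ^ γ i))
    (hI₂ : I₂ = Ideal.span (Set.range fun j => X 0 ^ ω j - X 1 ^ ω j)) :
    ∀ a b : ℕ,
      IsIntegralOverIdeal IΔ (X 0 ^ a * X 1 ^ b - X 2 ^ a * X 3 ^ b) ↔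
        (IsIntegralOverIdeal I₁ (X 0 ^ a - X 1 ^ a) ∧
         IsIntegralOverIdeal I₂ (X 0 ^ b - X 1 ^ b)) :=
  saturation_of_product_of_curves_general m n γ ω IΔ hIΔ I₁ I₂ hI₁ hI₂
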